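/- There is no constant c > 0 such that Var(X) ≤ c · e^{2h(p)} for all symmetric unimodal densities p: for the two-component uniform mixture p = α₁ unif(-1/(2ε₁),1/(2ε₁)) + α₂ unif(-1/(2ε₂),1/(2ε₂)) with fixed α₁,α₂ ∈ (0,1), α₁+α₂=1, fixed ε₁>0, the ratio Var(X)/e^{2h(p)} tends to ∞ as ε₂ → 0. -/

import Mathlib

/-!
For `ε₂ ≤ ε₁` the supports are nested, so `p` is a step function taking the values
`α₁ε₁ + α₂ε₂` and `α₂ε₂`, and both `Var(X) = α₁/(12ε₁²) + α₂/(12ε₂²)` and `h(p)` are explicit.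
The entropy power `e^{2h(p)}` behaves like `ε₂^{-2α₂}`, so the ratio is a continuous function of
`ε₂`, positive at `ε₂ = 0`, times `ε₂^{2α₂ - 2} = ε₂^{-2α₁}`, which tends to `∞`.
-/

open MeasureTheory Real Filter Set Topology

/-- Two-component uniform mixture density centered at `0`. -/
noncomputable def pmix (α₁ α₂ ε₁ ε₂ : ℝ) (x : ℝ) : ℝ :=
  α₁ * (if |x| ≤ 1 / (2 * ε₁) then ε₁ else 0) +
    α₂ * (if |x| ≤ 1 / (2 * ε₂) then ε₂ else 0)

lemma comp_indicator_add_indicator_of_subset {X M N : Type*} [AddZeroClass M] [AddGroup N]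
    {s t : Set X} (hst : s ⊆ t) (g : M → N) (hg : g 0 = 0) (u v : M) (x : X) :
    g (s.indicator (fun _ => u) x + t.indicator (fun _ => v) x) =
      s.indicator (fun _ => g (u + v) - g v) x + t.indicator (fun _ => g v) x := by
  by_cases hs : x ∈ s
  · simp [hs, hst hs]
  · by_cases ht : x ∈ t <;> simp [hs, ht, hg]

lemma integral_indicator_Icc_neg_const {a : ℝ} (ha : 0 ≤ a) (c : ℝ) :
    ∫ x, (Icc (-a) a).indicator (fun _ => c) x = 2 * a * c := by
  rw [integral_indicator_const _ measurableSet_Icc, Real.volume_real_Icc_of_le (by linarith),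
    smul_eq_mul]
  ring

lemma integral_sq_mul_indicator_Icc_neg_const {a : ℝ} (ha : 0 ≤ a) (c : ℝ) :
    ∫ x, x ^ 2 * (Icc (-a) a).indicator (fun _ => c) x = 2 * a ^ 3 * c / 3 := by
  simp_rw [← indicator_mul_right _ (fun y : ℝ => y ^ 2)]
  rw [integral_indicator measurableSet_Icc, integral_Icc_eq_integral_Ioc,
    ← intervalIntegral.integral_of_le (by linarith), intervalIntegral.integral_mul_const,
    integral_pow]
  ring

lemma pmix_eq_indicator (α₁ α₂ ε₁ ε₂ x : ℝ) :
    pmix α₁ α₂ ε₁ ε₂ x =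
      (Icc (-(1 / (2 * ε₁))) (1 / (2 * ε₁))).indicator (fun _ => α₁ * ε₁) x +
        (Icc (-(1 / (2 * ε₂))) (1 / (2 * ε₂))).indicator (fun _ => α₂ * ε₂) x := by
  simp only [pmix, indicator_apply, mem_Icc, ← abs_le, mul_ite, mul_zero]

lemma integral_sq_mul_pmix (α₁ α₂ : ℝ) {ε₁ ε₂ : ℝ} (hε₁ : 0 < ε₁) (hε₂ : 0 < ε₂) :
    ∫ x, x ^ 2 * pmix α₁ α₂ ε₁ ε₂ x = α₁ / (12 * ε₁ ^ 2) + α₂ / (12 * ε₂ ^ 2) := by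
  have hint : ∀ a c : ℝ, Integrable fun x => x ^ 2 * (Icc (-a) a).indicator (fun _ => c) x :=
    fun a c => by
      simp_rw [← indicator_mul_right _ (fun y : ℝ => y ^ 2)]
      exact (continuous_pow 2 |>.mul continuous_const).integrableOn_Icc.integrable_indicator
        measurableSet_Icc
  simp_rw [pmix_eq_indicator, mul_add]
  rw [integral_add (hint _ _) (hint _ _), integral_sq_mul_indicator_Icc_neg_const (by positivity),
    integral_sq_mul_indicator_Icc_neg_const (by positivity)]
  field_simp
  ring

lemma integral_pmix_mul_log (α₁ α₂ : ℝ) {ε₁ ε₂ : ℝ} (hε₂ : 0 < ε₂) (hε : ε₂ ≤ ε₁) :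
    ∫ x, pmix α₁ α₂ ε₁ ε₂ x * log (pmix α₁ α₂ ε₁ ε₂ x) =
      ((α₁ * ε₁ + α₂ * ε₂) * log (α₁ * ε₁ + α₂ * ε₂) - α₂ * ε₂ * log (α₂ * ε₂)) / ε₁ +
        α₂ * ε₂ * log (α₂ * ε₂) / ε₂ := by
  have hε₁ : 0 < ε₁ := hε₂.trans_le hε
  have hwidth : 1 / (2 * ε₁) ≤ 1 / (2 * ε₂) := by gcongr
  have hsub := Icc_subset_Icc (neg_le_neg hwidth) hwidth
  have hint : ∀ a c : ℝ, Integrable fun x => (Icc (-a) a).indicator (fun _ => c) x :=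
    fun a c => continuous_const.integrableOn_Icc.integrable_indicator measurableSet_Icc
  simp_rw [pmix_eq_indicator,
    comp_indicator_add_indicator_of_subset hsub (fun y => y * log y) (by simp)]
  rw [integral_add (hint _ _) (hint _ _), integral_indicator_Icc_neg_const (by positivity),
    integral_indicator_Icc_neg_const (by positivity)]
  field_simp

/-- `Var(X) e^{-2h(p)} ε₂^{2α₁}` at `ε₂ = t ≤ ε₁`, in a form continuous down to `t = 0`. -/
noncomputable def pmixRatioCoeff (α₁ α₂ ε₁ t : ℝ) : ℝ :=
  (α₁ * t ^ 2 / (12 * ε₁ ^ 2) + α₂ / 12) * α₂ ^ (2 * α₂) *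
    exp (2 * ((α₁ * ε₁ + α₂ * t) * log (α₁ * ε₁ + α₂ * t) - α₂ * t * log (α₂ * t)) / ε₁)

lemma continuous_pmixRatioCoeff (α₁ α₂ ε₁ : ℝ) : Continuous (pmixRatioCoeff α₁ α₂ ε₁) := by
  unfold pmixRatioCoeff
  have hφ := continuous_mul_log
  fun_prop

lemma pmixRatioCoeff_zero_pos {α₁ α₂ ε₁ : ℝ} (h2 : 0 < α₂) : 0 < pmixRatioCoeff α₁ α₂ ε₁ 0 := by
  simp only [pmixRatioCoeff, ne_eq, OfNat.ofNat_ne_zero, not_false_eq_true, zero_pow, mul_zero,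
    zero_div, zero_add, add_zero, log_zero, sub_zero]
  positivity

lemma pmix_moment_div_entropy_power_eq {α₁ α₂ ε₁ t : ℝ} (h2 : 0 < α₂) (hsum : α₁ + α₂ = 1)
    (ht : 0 < t) (htε : t ≤ ε₁) :
    (∫ x, x ^ 2 * pmix α₁ α₂ ε₁ t x) /
        exp (2 * (-∫ x, pmix α₁ α₂ ε₁ t x * log (pmix α₁ α₂ ε₁ t x))) =
      pmixRatioCoeff α₁ α₂ ε₁ t * t ^ (-(2 * α₁)) := by
  have hε₁ : 0 < ε₁ := ht.trans_le htε
  have hlog : α₂ * t * log (α₂ * t) / t = α₂ * log (α₂ * t) := by field_simp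
  have hpow : exp (2 * (α₂ * log (α₂ * t))) = α₂ ^ (2 * α₂) * t ^ 2 * t ^ (-(2 * α₁)) := by
    have hexp : 2 * α₂ = 2 + -(2 * α₁) := by linarith
    rw [show 2 * (α₂ * log (α₂ * t)) = log (α₂ * t) * (2 * α₂) by ring,
      ← rpow_def_of_pos (by positivity), mul_rpow h2.le ht.le,
      hexp, rpow_add ht, rpow_two, ← hexp, mul_assoc]
  rw [integral_sq_mul_pmix α₁ α₂ hε₁ ht, integral_pmix_mul_log α₁ α₂ ht htε, mul_neg, exp_neg,
    div_inv_eq_mul, hlog, mul_add, exp_add, hpow, pmixRatioCoeff]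
  field_simp

theorem no_uniform_entropy_power_bound_general (α₁ α₂ ε₁ : ℝ)
    (h1 : 0 < α₁) (h2 : 0 < α₂)
    (hsum : α₁ + α₂ = 1) (hε₁ : 0 < ε₁) :
    Filter.Tendsto
      (fun ε₂ : ℝ =>
        (∫ x : ℝ, x ^ 2 * pmix α₁ α₂ ε₁ ε₂ x) /
          Real.exp (2 * (-∫ x : ℝ, pmix α₁ α₂ ε₁ ε₂ x * Real.log (pmix α₁ α₂ ε₁ ε₂ x))))
      (nhdsWithin 0 (Set.Ioi 0)) Filter.atTop := by
  have hcoeff : Tendsto (pmixRatioCoeff α₁ α₂ ε₁) (𝓝[>] 0) (𝓝 (pmixRatioCoeff α₁ α₂ ε₁ 0)) :=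
    (continuous_pmixRatioCoeff α₁ α₂ ε₁).continuousWithinAt
  refine (Tendsto.pos_mul_atTop (pmixRatioCoeff_zero_pos h2) hcoeff
    (tendsto_rpow_neg_nhdsGT_zero (y := -(2 * α₁)) (by linarith))).congr' ?_
  filter_upwards [Ioc_mem_nhdsGT hε₁] with t ht
  exact (pmix_moment_div_entropy_power_eq h2 hsum ht.1 ht.2).symm

/-- No constant scaling of the entropy power can upper bound the variance of all
symmetric unimodal densities: for the two-component uniform mixture with fixed
weights `α₁, α₂` and fixed `ε₁ > 0`, the ratio `Var(X)/e^{2h(p)}` tends to `∞`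
as `ε₂ → 0⁺`. -/
theorem no_uniform_entropy_power_bound (α₁ α₂ ε₁ : ℝ)
    (h1 : 0 < α₁) (h1' : α₁ < 1) (h2 : 0 < α₂) (h2' : α₂ < 1)
    (hsum : α₁ + α₂ = 1) (hε₁ : 0 < ε₁) :
    Filter.Tendsto
      (fun ε₂ : ℝ =>
        (∫ x : ℝ, x ^ 2 * pmix α₁ α₂ ε₁ ε₂ x) /
          Real.exp (2 * (-∫ x : ℝ, pmix α₁ α₂ ε₁ ε₂ x * Real.log (pmix α₁ α₂ ε₁ ε₂ x))))
      (nhdsWithin 0 (Set.Ioi 0)) Filter.atTop :=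
  no_uniform_entropy_power_bound_general α₁ α₂ ε₁ h1 h2 hsum hε₁
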